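/- Define the function A_{i,ε}(t) piecewise by A = 1 for t ≤ i − 1/2, A(t) = E(t − i + 1/2) for i − 1/2 < t ≤ i − ε, and A(t) = E(t − i + 1/2)τ_{i−ε,i}(t) for t > i − ε, where E(t) = 1 + e^{−1/t} and τ_{a,b} is the standard smooth cutoff equal to 1 for t ≤ a and 0 for t ≥ b built from e^{1/t}/(e^{1/(1−t)}+e^{1/t}). If 0 < b − a < 1 the cutoff satisfies 0 ≥ τ_{a,b}² − τ_{a,b} ≥ τ'_{a,b}, and E satisfies E² ≥ E ≥ E' for t > 0; consequently B(a) := ∫₀ᵃ A dt satisfies (B')² − B'' = A² − A' ≥ 0, so the metric da² + e^{−2B(a)}(dx² + dy²) has ρ''(a) ≥ 0 for ρ(a) = e^{−B(a)} and hence nonpositive sectional curvatures K(∂_x,∂_y) = −(ρ'/ρ)², K(∂_a,∂_x) = K(∂_a,∂_y) = −ρ''/ρ. -/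

import Mathlib

/-!
Both factors of `A = E · τ` satisfy Riccati-type inequalities. Writing `g = expNegInvGlue`,
`g(s)/s² ≤ 1` (equivalently `u² ≤ eᵘ`) gives `E' ≤ 1 ≤ E`. The smooth transition
`T = g(x)/(g(x) + g(1-x))` has `T - T² = g(x)g(1-x)/D²`, while `T'` contains the larger term
`g(x)g(1-x)/(x²D²)`, so `T' ≥ T - T²`; the cutoff `τ_{a,b}` is `T` composed with an affine map of
slope `-1/(b-a) ≤ -1`, hence `τ' ≤ τ² - τ`. Then `(Eτ)' ≤ Eτ + E(τ² - τ) = Eτ² ≤ (Eτ)²`.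
Finally `B' = A`, and `ρ = e^{-B}` satisfies `ρ'' = ρ (A² - A') ≥ 0`.
-/

noncomputable section

/-- The standard smooth cutoff `τ₀₁`, equal to `1` for `t ≤ 0` and `0` for `t ≥ 1`. -/
def tau01 (t : ℝ) : ℝ :=
  if t ≤ 0 then 1
  else if 1 ≤ t then 0
  else Real.exp (1 / t) / (Real.exp (1 / (1 - t)) + Real.exp (1 / t))

/-- The rescaled cutoff `τ_{a,b}(t) = τ₀₁((t − a)/(b − a))`. -/
def tauab (a b t : ℝ) : ℝ := tau01 ((t - a) / (b - a))

/-- `E(t) = 1 + e^{−1/t}` for `t > 0` (extended by the same formula). -/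
def Efun (t : ℝ) : ℝ := 1 + Real.exp (-1 / t)

/-- The interpolating function `A_{i,ε}`. -/
def Afun (i ε t : ℝ) : ℝ :=
  if t ≤ i - 1 / 2 then 1
  else if t ≤ i - ε then Efun (t - i + 1 / 2)
  else Efun (t - i + 1 / 2) * tauab (i - ε) i t

/-- `B_{i,ε}(a) = ∫₀ᵃ A_{i,ε}(t) dt`. -/
def Bfun (i ε a : ℝ) : ℝ := ∫ t in (0:ℝ)..a, Afun i ε t

/-- The warping function `ρ_{i,ε}(a) = e^{−B_{i,ε}(a)}`. -/
def rhoFun (i ε a : ℝ) : ℝ := Real.exp (-(Bfun i ε a))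

open Real

lemma sq_le_exp_of_nonneg {x : ℝ} (hx : 0 ≤ x) : x ^ 2 ≤ exp x := by
  have h := sum_le_exp_of_nonneg hx 4
  norm_num [Finset.sum_range_succ, Nat.factorial] at h
  nlinarith [mul_nonneg hx (sq_nonneg (x - 3 / 2))]

namespace expNegInvGlue

lemma le_sq (x : ℝ) : expNegInvGlue x ≤ x ^ 2 := by
  rcases le_or_gt x 0 with hx | hx
  · rw [zero_of_nonpos hx]
    positivity
  · rw [expNegInvGlue, if_neg hx.not_ge, exp_neg, inv_le_comm₀ (exp_pos _) (by positivity),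
      ← inv_pow]
    exact sq_le_exp_of_nonneg (inv_nonneg.2 hx.le)

lemma div_sq_le_one (x : ℝ) : expNegInvGlue x / x ^ 2 ≤ 1 :=
  div_le_one_of_le₀ (le_sq x) (sq_nonneg x)

lemma hasDerivAt_self_div_sq (x : ℝ) :
    HasDerivAt expNegInvGlue (expNegInvGlue x / x ^ 2) x := by
  have h := hasDerivAt_polynomial_eval_inv_mul 1 x
  simp only [Polynomial.derivative_one, sub_zero, mul_one, Polynomial.eval_one, one_mul,
    Polynomial.eval_pow, Polynomial.eval_X] at h
  rwa [div_eq_mul_inv, ← inv_pow, mul_comm]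

lemma mul_le_div_sq_mul (x : ℝ) :
    expNegInvGlue x * expNegInvGlue (1 - x) ≤ expNegInvGlue x / x ^ 2 * expNegInvGlue (1 - x) := by
  rcases le_or_gt x 0 with hx | hx
  · simp [zero_of_nonpos hx]
  rcases le_or_gt 1 x with hx1 | hx1
  · simp [zero_of_nonpos (sub_nonpos.2 hx1)]
  refine mul_le_mul_of_nonneg_right ?_ (nonneg _)
  exact le_div_self (nonneg x) (by positivity) (pow_le_one₀ hx.le hx1.le)

end expNegInvGlue

lemma Real.smoothTransition.exists_hasDerivAt_sub_sq_le (x : ℝ) :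
    ∃ d, HasDerivAt smoothTransition d x ∧ 0 ≤ d ∧ smoothTransition x - smoothTransition x ^ 2 ≤ d := by
  have hD := smoothTransition.pos_denom x
  have hg₀ := expNegInvGlue.nonneg x
  have hg₁ := expNegInvGlue.nonneg (1 - x)
  have hg := expNegInvGlue.hasDerivAt_self_div_sq x
  have hg' : HasDerivAt (fun y => expNegInvGlue (1 - y))
      (expNegInvGlue (1 - x) / (1 - x) ^ 2 * -1) x :=
    (expNegInvGlue.hasDerivAt_self_div_sq (1 - x)).comp x ((hasDerivAt_id' x).const_sub 1)
  refine ⟨(expNegInvGlue x / x ^ 2 * expNegInvGlue (1 - x)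
      + expNegInvGlue x * (expNegInvGlue (1 - x) / (1 - x) ^ 2))
      / (expNegInvGlue x + expNegInvGlue (1 - x)) ^ 2, ?_, by positivity, ?_⟩
  · exact (hg.div (hg.add hg') hD.ne').congr_deriv (by simp only [Pi.add_apply]; ring)
  · have hT : smoothTransition x - smoothTransition x ^ 2
        = expNegInvGlue x * expNegInvGlue (1 - x) / (expNegInvGlue x + expNegInvGlue (1 - x)) ^ 2 := by
      rw [smoothTransition]
      field_simp
      ring
    rw [hT]
    gcongr
    have : 0 ≤ expNegInvGlue x * (expNegInvGlue (1 - x) / (1 - x) ^ 2) := by positivity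
    linarith [expNegInvGlue.mul_le_div_sq_mul x]

lemma tau01_eq_smoothTransition (t : ℝ) : tau01 t = smoothTransition (1 - t) := by
  rw [tau01]
  split_ifs with h0 h1
  · exact (smoothTransition.one_of_one_le (by linarith)).symm
  · exact (smoothTransition.zero_of_nonpos (by linarith)).symm
  · have e₁ : expNegInvGlue (1 - t) = exp (-(1 / (1 - t))) := by
      simp [expNegInvGlue, h1]
    have e₂ : expNegInvGlue (1 - (1 - t)) = exp (-(1 / t)) := by
      simp [expNegInvGlue, h0]
    rw [smoothTransition, e₁, e₂, exp_neg, exp_neg]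
    field_simp
    ring

lemma tauab_eq_smoothTransition (a b t : ℝ) :
    tauab a b t = smoothTransition (1 - (t - a) / (b - a)) :=
  tau01_eq_smoothTransition _

lemma tauab_nonneg (a b t : ℝ) : 0 ≤ tauab a b t :=
  tauab_eq_smoothTransition a b t ▸ smoothTransition.nonneg _

lemma tauab_le_one (a b t : ℝ) : tauab a b t ≤ 1 :=
  tauab_eq_smoothTransition a b t ▸ smoothTransition.le_one _

lemma tauab_eq_one_of_le {a b t : ℝ} (hab : a < b) (ht : t ≤ a) : tauab a b t = 1 :=
  if_pos (div_nonpos_of_nonpos_of_nonneg (by linarith) (by linarith))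

lemma exists_hasDerivAt_tauab_le {a b : ℝ} (hab : 0 < b - a) (hab1 : b - a ≤ 1) (t : ℝ) :
    ∃ d, HasDerivAt (tauab a b) d t ∧ d ≤ tauab a b t ^ 2 - tauab a b t := by
  obtain ⟨d, hd, hd0, hdT⟩ := smoothTransition.exists_hasDerivAt_sub_sq_le (1 - (t - a) / (b - a))
  have hu : HasDerivAt (fun s => 1 - (s - a) / (b - a)) (-(1 / (b - a))) t := by
    simpa using (((hasDerivAt_id t).sub_const a).div_const (b - a)).const_sub 1
  have hslope : 1 ≤ 1 / (b - a) := one_le_one_div hab hab1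
  rw [show tauab a b = _ from funext (tauab_eq_smoothTransition a b)]
  exact ⟨d * -(1 / (b - a)), HasDerivAt.comp (h₂ := smoothTransition) t hd hu, by nlinarith⟩

lemma Efun_eq_of_pos {s : ℝ} (hs : 0 < s) : Efun s = 1 + expNegInvGlue s := by
  simp [Efun, expNegInvGlue, hs.not_ge, neg_div]

lemma hasDerivAt_Efun {t : ℝ} (ht : 0 < t) : HasDerivAt Efun (expNegInvGlue t / t ^ 2) t := by
  refine ((expNegInvGlue.hasDerivAt_self_div_sq t).const_add 1).congr_of_eventuallyEq ?_
  filter_upwards [lt_mem_nhds ht] with s hs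
  exact Efun_eq_of_pos hs

lemma Afun_eq {i ε : ℝ} (hε0 : 0 < ε) (hε2 : ε ≤ 1 / 2) (t : ℝ) :
    Afun i ε t = (1 + expNegInvGlue (t - i + 1 / 2)) * tauab (i - ε) i t := by
  have hlt : i - ε < i := by linarith
  rw [Afun]
  split_ifs with h₁ h₂
  · rw [expNegInvGlue.zero_of_nonpos (by linarith), tauab_eq_one_of_le hlt (by linarith)]
    ring
  · rw [Efun_eq_of_pos (by linarith), tauab_eq_one_of_le hlt h₂, mul_one]
  · rw [Efun_eq_of_pos (by linarith)]

lemma mul_deriv_add_mul_deriv_le_sq {G G' τ τ' : ℝ} (hG : 1 ≤ G) (hG' : G' ≤ G) (hτ : 0 ≤ τ)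
    (hτ' : τ' ≤ τ ^ 2 - τ) : G' * τ + G * τ' ≤ (G * τ) ^ 2 := by
  nlinarith [mul_le_mul_of_nonneg_right hG' hτ, mul_le_mul_of_nonneg_left hτ' (by linarith : 0 ≤ G),
    mul_nonneg (mul_nonneg (by linarith : 0 ≤ G) (by linarith : 0 ≤ G - 1)) (sq_nonneg τ)]

lemma exists_hasDerivAt_Afun_le_sq {i ε : ℝ} (hε0 : 0 < ε) (hε2 : ε ≤ 1 / 2) (t : ℝ) :
    ∃ d, HasDerivAt (Afun i ε) d t ∧ d ≤ Afun i ε t ^ 2 := by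
  obtain ⟨dτ, hτ, hτ'⟩ := exists_hasDerivAt_tauab_le (a := i - ε) (b := i) (by linarith)
    (by linarith) t
  have hG : HasDerivAt (fun s => 1 + expNegInvGlue (s - i + 1 / 2))
      (expNegInvGlue (t - i + 1 / 2) / (t - i + 1 / 2) ^ 2) t := by
    exact (((expNegInvGlue.hasDerivAt_self_div_sq _).comp t
      (((hasDerivAt_id t).sub_const i).add_const (1 / 2))).const_add 1).congr_deriv (mul_one _)
  rw [show Afun i ε = _ from funext (Afun_eq hε0 hε2)]
  refine ⟨_, hG.mul hτ, ?_⟩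
  refine mul_deriv_add_mul_deriv_le_sq ?_ ?_ ?_ hτ'
  · linarith [expNegInvGlue.nonneg (t - i + 1 / 2)]
  · linarith [expNegInvGlue.nonneg (t - i + 1 / 2), expNegInvGlue.div_sq_le_one (t - i + 1 / 2)]
  · exact tauab_nonneg _ _ _

lemma hasDerivAt_Bfun {i ε : ℝ} (hε0 : 0 < ε) (hε2 : ε ≤ 1 / 2) (x : ℝ) :
    HasDerivAt (Bfun i ε) (Afun i ε x) x := by
  have hA : Continuous (Afun i ε) := continuous_iff_continuousAt.2 fun t =>
    (exists_hasDerivAt_Afun_le_sq hε0 hε2 t).choose_spec.1.continuousAt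
  exact (hA.integral_hasStrictDerivAt 0 x).hasDerivAt

lemma deriv_deriv_exp_neg {B A : ℝ → ℝ} {A' x : ℝ} (hB : ∀ y, HasDerivAt B (A y) y)
    (hA : HasDerivAt A A' x) :
    deriv (deriv fun y => exp (-B y)) x = exp (-B x) * (A x ^ 2 - A') := by
  have hρ' : deriv (fun y => exp (-B y)) = fun y => exp (-B y) * -A y :=
    funext fun y => ((hB y).neg.exp).deriv
  rw [hρ']
  exact ((hB x).neg.exp.mul hA.neg).deriv.trans (by simp only [Pi.neg_apply]; ring)


theorem interpolation_gives_nonpositive_curvature_general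
    (a b : ℝ) (hab : 0 < b - a) (hab1 : b - a < 1)
    (i ε : ℝ) (hε0 : 0 < ε) (hε2 : ε ≤ 1 / 2) :
    (∀ t, tauab a b t ^ 2 - tauab a b t ≤ 0
        ∧ deriv (tauab a b) t ≤ tauab a b t ^ 2 - tauab a b t)
    ∧ (∀ t, 0 < t → Efun t ≤ Efun t ^ 2 ∧ deriv Efun t ≤ Efun t)
    ∧ (∀ t, 0 ≤ Afun i ε t ^ 2 - deriv (Afun i ε) t)
    ∧ (∀ x, 0 ≤ deriv (fun y => Bfun i ε y) x ^ 2
          - deriv (deriv fun y => Bfun i ε y) x)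
    ∧ (∀ x, 0 ≤ deriv (deriv fun y => rhoFun i ε y) x
        ∧ -((deriv (fun y => rhoFun i ε y) x / rhoFun i ε x) ^ 2) ≤ 0
        ∧ -(deriv (deriv fun y => rhoFun i ε y) x / rhoFun i ε x) ≤ 0) := by
  have hA : ∀ t, 0 ≤ Afun i ε t ^ 2 - deriv (Afun i ε) t := fun t => by
    obtain ⟨d, hd, hdA⟩ := exists_hasDerivAt_Afun_le_sq hε0 hε2 t
    rw [hd.deriv]
    linarith
  have hB' : deriv (fun y => Bfun i ε y) = Afun i ε :=
    funext fun x => (hasDerivAt_Bfun hε0 hε2 x).deriv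
  refine ⟨fun t => ?_, fun t ht => ?_, hA, fun x => hB' ▸ hA x, fun x => ?_⟩
  · obtain ⟨d, hd, hdτ⟩ := exists_hasDerivAt_tauab_le hab hab1.le t
    have := tauab_nonneg a b t
    have := tauab_le_one a b t
    exact ⟨by nlinarith, hd.deriv ▸ hdτ⟩
  · have hE : 1 ≤ Efun t := by
      rw [Efun_eq_of_pos ht]
      linarith [expNegInvGlue.nonneg t]
    rw [(hasDerivAt_Efun ht).deriv]
    exact ⟨by nlinarith, (expNegInvGlue.div_sq_le_one t).trans hE⟩
  · obtain ⟨d, hd, hdA⟩ := exists_hasDerivAt_Afun_le_sq hε0 hε2 x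
    have hρ : 0 < rhoFun i ε x := exp_pos _
    have hρ'' : deriv (deriv fun y => rhoFun i ε y) x = rhoFun i ε x * (Afun i ε x ^ 2 - d) :=
      deriv_deriv_exp_neg (hasDerivAt_Bfun hε0 hε2) hd
    have hconvex : 0 ≤ deriv (deriv fun y => rhoFun i ε y) x :=
      hρ'' ▸ mul_nonneg hρ.le (by linarith)
    exact ⟨hconvex, neg_nonpos.2 (sq_nonneg _), neg_nonpos.2 (div_nonneg hconvex hρ.le)⟩

/-- Properties of the interpolation: for `0 < b − a < 1` the cutoff satisfies
`0 ≥ τ² − τ ≥ τ'`; `E` satisfies `E² ≥ E ≥ E'` for `t > 0`; consequently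
`A² − A' ≥ 0`, so `B = ∫₀· A` satisfies `(B')² − B'' ≥ 0`, whence `ρ = e^{−B}` has
`ρ'' ≥ 0` and the warped metric `da² + e^{−2B}(dx² + dy²)` has nonpositive sectional
curvatures `K(∂_x,∂_y) = −(ρ'/ρ)² ≤ 0` and `K(∂_a,∂_x) = K(∂_a,∂_y) = −ρ''/ρ ≤ 0`. -/
theorem interpolation_gives_nonpositive_curvature
    (a b : ℝ) (hab : 0 < b - a) (hab1 : b - a < 1)
    (i ε : ℝ) (hε0 : 0 < ε) (hε1 : ε < 1) (hε2 : ε ≤ 1 / 2) :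
    (∀ t, tauab a b t ^ 2 - tauab a b t ≤ 0
        ∧ deriv (tauab a b) t ≤ tauab a b t ^ 2 - tauab a b t)
    ∧ (∀ t, 0 < t → Efun t ≤ Efun t ^ 2 ∧ deriv Efun t ≤ Efun t)
    ∧ (∀ t, 0 ≤ Afun i ε t ^ 2 - deriv (Afun i ε) t)
    ∧ (∀ x, 0 ≤ deriv (fun y => Bfun i ε y) x ^ 2
          - deriv (deriv fun y => Bfun i ε y) x)
    ∧ (∀ x, 0 ≤ deriv (deriv fun y => rhoFun i ε y) x
        ∧ -((deriv (fun y => rhoFun i ε y) x / rhoFun i ε x) ^ 2) ≤ 0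
        ∧ -(deriv (deriv fun y => rhoFun i ε y) x / rhoFun i ε x) ≤ 0) :=
  interpolation_gives_nonpositive_curvature_general a b hab hab1 i ε hε0 hε2
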